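/- SHIN lacks the finite model property: let C be a concept name, F and R role names with R transitive, and let R⁺ be the role hierarchy generated by the single axiom F ⊑ R. Then the concept ¬C ⊓ ∃F⁻.(C ⊓ (≤ 1 F)) ⊓ ∀R⁻.(∃F⁻.(C ⊓ (≤ 1 F))) is satisfiable with respect to R⁺, but every model I of R⁺ in which this concept has an instance has an infinite domain Δ^I. -/

import Mathlib

/-- SHIQ-roles: role names (indexed by ℕ) and their inverses. -/
inductive Role where
  | atom : ℕ → Role
  | inv  : ℕ → Role
deriving DecidableEq

/-- The function `Inv` on roles: `Inv(R) = R⁻`, `Inv(R⁻) = R`. -/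
def Role.Inv : Role → Role
  | .atom r => .inv r
  | .inv r  => .atom r

/-- The underlying role name of a (possibly inverse) role. -/
def Role.name : Role → ℕ
  | .atom r => r
  | .inv r  => r

/-- Concepts of the SHIQ family (with ⊤ and ⊥ for convenience). -/
inductive DLConcept where
  | top : DLConcept
  | bot : DLConcept
  | atom : ℕ → DLConcept
  | neg : DLConcept → DLConcept
  | and : DLConcept → DLConcept → DLConcept
  | or : DLConcept → DLConcept → DLConcept
  | all : Role → DLConcept → DLConcept
  | ex : Role → DLConcept → DLConcept
  | atleast : ℕ → Role → DLConcept → DLConcept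
  | atmost : ℕ → Role → DLConcept → DLConcept
deriving DecidableEq

/-- An interpretation: a (nonempty) domain, a valuation of concept names and
    of role names. -/
structure Interp where
  Dom : Type
  dom_nonempty : Nonempty Dom
  cI : ℕ → Set Dom
  rI : ℕ → Dom → Dom → Prop

/-- Semantics of (possibly inverse) roles. -/
def Interp.rSem (I : Interp) : Role → I.Dom → I.Dom → Prop
  | .atom r => I.rI r
  | .inv r  => fun x y => I.rI r y x

/-- Semantics of concepts; number restrictions are interpreted by counting
    role successors (via cardinalities, so that infinite sets are handled
    correctly). -/
def Interp.cSem (I : Interp) : DLConcept → Set I.Dom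
  | .top => Set.univ
  | .bot => ∅
  | .atom a => I.cI a
  | .neg C => (I.cSem C)ᶜ
  | .and C D => I.cSem C ∩ I.cSem D
  | .or C D => I.cSem C ∪ I.cSem D
  | .all R C => {x | ∀ y, I.rSem R x y → y ∈ I.cSem C}
  | .ex R C => {x | ∃ y, I.rSem R x y ∧ y ∈ I.cSem C}
  | .atleast n R C => {x | (n : Cardinal) ≤ Cardinal.mk {y // I.rSem R x y ∧ y ∈ I.cSem C}}
  | .atmost n R C => {x | Cardinal.mk {y // I.rSem R x y ∧ y ∈ I.cSem C} ≤ (n : Cardinal)}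

/-- `I.Good Rp`: the interpretation interprets every transitive role name
    (member of `Rp`) by a transitive relation. -/
def Interp.Good (I : Interp) (Rp : Set ℕ) : Prop :=
  ∀ r ∈ Rp, Transitive (I.rI r)

/-- The role hierarchy ⊑* generated by a finite set of role inclusion axioms:
    inverses are added and the transitive-reflexive closure is taken. -/
def SubRole (RIA : List (Role × Role)) : Role → Role → Prop :=
  Relation.ReflTransGen (fun R S => (R, S) ∈ RIA ∨ (R.Inv, S.Inv) ∈ RIA)

/-- `I ⊨ R⁺`: the interpretation satisfies the role hierarchy. -/
def Interp.ModelsRH (I : Interp) (RIA : List (Role × Role)) : Prop :=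
  ∀ R S, SubRole RIA R S → ∀ x y, I.rSem R x y → I.rSem S x y

/-- `Trans(R)`: a (possibly inverse) role is transitive iff its name is in `Rp`. -/
def RTrans (Rp : Set ℕ) : Role → Prop
  | .atom r => r ∈ Rp
  | .inv r  => r ∈ Rp

/-- A role is simple iff it is neither transitive nor has a transitive sub-role. -/
def SimpleRole (Rp : Set ℕ) (RIA : List (Role × Role)) (R : Role) : Prop :=
  ∀ S, SubRole RIA S R → ¬ RTrans Rp S

/-- SHIQ-concepts: number restrictions occur only on simple roles. -/
def DLConcept.IsSHIQ (Rp : Set ℕ) (RIA : List (Role × Role)) : DLConcept → Prop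
  | .top | .bot | .atom _ => True
  | .neg C => C.IsSHIQ Rp RIA
  | .and C D | .or C D => C.IsSHIQ Rp RIA ∧ D.IsSHIQ Rp RIA
  | .all _ C | .ex _ C => C.IsSHIQ Rp RIA
  | .atleast _ R C | .atmost _ R C => SimpleRole Rp RIA R ∧ C.IsSHIQ Rp RIA

/-- Satisfiability of a concept w.r.t. a role hierarchy. -/
def Satisfiable (Rp : Set ℕ) (RIA : List (Role × Role)) (C : DLConcept) : Prop :=
  ∃ I : Interp, I.Good Rp ∧ I.ModelsRH RIA ∧ (I.cSem C).Nonempty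

/-- Subsumption of concepts w.r.t. a role hierarchy. -/
def Subsumes (Rp : Set ℕ) (RIA : List (Role × Role)) (C D : DLConcept) : Prop :=
  ∀ I : Interp, I.Good Rp → I.ModelsRH RIA → I.cSem C ⊆ I.cSem D

/-- **SHIN lacks the finite model property.** Let `c` be a concept
name and `F`, `R` role names with `R` transitive (`F` simple) and role hierarchy
generated by `F ⊑ R`. The concept
`¬C ⊓ ∃F⁻.(C ⊓ (≤ 1 F)) ⊓ ∀R⁻.(∃F⁻.(C ⊓ (≤ 1 F)))` is satisfiable w.r.t. this
hierarchy, but every model of the hierarchy in which it has an instance has an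
infinite domain. -/
theorem shin_no_finite_model (Rp : Set ℕ) (c F R : ℕ)
    (hR : R ∈ Rp) (hF : F ∉ Rp) :
    let RIA : List (Role × Role) := [(Role.atom F, Role.atom R)]
    let atMostOneF : DLConcept := DLConcept.atmost 1 (Role.atom F) DLConcept.top
    let Dcon : DLConcept :=
      DLConcept.and (DLConcept.neg (DLConcept.atom c))
        (DLConcept.and
          (DLConcept.ex (Role.inv F) (DLConcept.and (DLConcept.atom c) atMostOneF))
          (DLConcept.all (Role.inv R)
            (DLConcept.ex (Role.inv F) (DLConcept.and (DLConcept.atom c) atMostOneF))))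
    Satisfiable Rp RIA Dcon ∧
      ∀ I : Interp, I.Good Rp → I.ModelsRH RIA → (I.cSem Dcon).Nonempty →
        Infinite I.Dom := by
  intro RIA atMostOneF Dcon
  have hFR : F ≠ R := fun h => hF (h ▸ hR)
  constructor
  · -- satisfiability: model on ℕ
    set J : Interp := ⟨ℕ, ⟨0⟩, fun _ => {n | 0 < n},
        fun r => if r = F then (fun x y => x = y + 1) else (fun x y => y < x)⟩ with hJ
    have hrF : ∀ x y : ℕ, J.rI F x y ↔ x = y + 1 := by
      intro x y
      show (if F = F then (fun x y : ℕ => x = y + 1) else (fun x y : ℕ => y < x)) x y ↔ _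
      rw [if_pos rfl]
    have hrO : ∀ r, r ≠ F → ∀ x y : ℕ, J.rI r x y ↔ y < x := by
      intro r hne x y
      show (if r = F then (fun x y : ℕ => x = y + 1) else (fun x y : ℕ => y < x)) x y ↔ _
      rw [if_neg hne]
    have hrR : ∀ x y : ℕ, J.rI R x y ↔ y < x := hrO R (fun h => hFR h.symm)
    have hcard : ∀ z : ℕ, z ∈ J.cSem atMostOneF := by
      intro z
      simp only [atMostOneF, Interp.cSem, Set.mem_setOf_eq, Nat.cast_one]
      have : Subsingleton {w : ℕ // J.rSem (Role.atom F) z w ∧ w ∈ J.cSem DLConcept.top} := by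
        constructor
        rintro ⟨a, ha, _⟩ ⟨b, hb, _⟩
        have ha' : z = a + 1 := (hrF z a).mp ha
        have hb' : z = b + 1 := (hrF z b).mp hb
        simp only [Subtype.mk.injEq]
        omega
      exact Cardinal.le_one_iff_subsingleton.mpr this
    refine ⟨J, ?_, ?_, ?_⟩
    · intro r hr
      have hne : r ≠ F := fun h => hF (h ▸ hr)
      intro a b d hab hbd
      exact (hrO r hne a d).mpr
        (lt_trans ((hrO r hne b d).mp hbd) ((hrO r hne a b).mp hab))
    · -- ModelsRH
      have step : ∀ A B : Role, ((A, B) ∈ RIA ∨ (A.Inv, B.Inv) ∈ RIA) →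
          ∀ x y, J.rSem A x y → J.rSem B x y := by
        rintro A B (h | h) x y hxy
        · simp only [RIA, List.mem_singleton, Prod.mk.injEq] at h
          obtain ⟨hA, hB⟩ := h
          subst hA; subst hB
          have hxy' : x = y + 1 := (hrF x y).mp hxy
          exact (hrR x y).mpr (hxy' ▸ Nat.lt_succ_self y)
        · simp only [RIA, List.mem_singleton, Prod.mk.injEq] at h
          obtain ⟨hA, hB⟩ := h
          have hA' : A = Role.inv F := by cases A <;> simp_all [Role.Inv]
          have hB' : B = Role.inv R := by cases B <;> simp_all [Role.Inv]
          subst hA'; subst hB'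
          have hxy' : y = x + 1 := (hrF y x).mp hxy
          exact (hrR y x).mpr (hxy' ▸ Nat.lt_succ_self x)
      intro A B h
      induction h with
      | refl => exact fun _ _ h => h
      | tail _ hs ih => exact fun x y hxy => step _ _ hs x y (ih x y hxy)
    · -- 0 is an instance of Dcon
      refine ⟨0, ?_, ⟨1, ?_, ?_, hcard 1⟩, ?_⟩
      · show (0 : ℕ) ∉ J.cI c
        exact Nat.lt_irrefl 0
      · show J.rI F 1 0
        rw [hrF]
      · show (1 : ℕ) ∈ J.cI c
        exact Nat.one_pos
      · intro y hy
        replace hy : J.rI R y 0 := hy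
        refine ⟨y + 1, ?_, ?_, hcard (y + 1)⟩
        · show J.rI F (y + 1) y
          rw [hrF]
        · show (y + 1 : ℕ) ∈ J.cI c
          exact Nat.succ_pos y
  · -- every model is infinite
    rintro I hGood hRH ⟨x₀, hx₀⟩
    obtain ⟨hnC, hex, hall⟩ := hx₀
    have hFsubR : ∀ x y, I.rI F x y → I.rI R x y := by
      intro x y h
      exact hRH (Role.atom F) (Role.atom R)
        (Relation.ReflTransGen.single (Or.inl (by simp [RIA]))) x y h
    have hRtrans : Transitive (I.rI R) := hGood R hR
    have unique_of : ∀ z : I.Dom, z ∈ I.cSem atMostOneF →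
        ∀ a b, I.rI F z a → I.rI F z b → a = b := by
      intro z hz a b ha hb
      simp only [atMostOneF, Interp.cSem, Interp.rSem, Set.mem_setOf_eq, Nat.cast_one] at hz
      have hsub : Subsingleton {w // I.rI F z w ∧ w ∈ (Set.univ : Set I.Dom)} :=
        Cardinal.le_one_iff_subsingleton.mp hz
      have := hsub.allEq ⟨a, ha, Set.mem_univ a⟩ ⟨b, hb, Set.mem_univ b⟩
      exact congrArg (fun s : {w // I.rI F z w ∧ w ∈ (Set.univ : Set I.Dom)} => s.1) this
    have key : ∀ y : I.Dom, (y = x₀ ∨ I.rI R y x₀) →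
        ∃ z, I.rI F z y ∧ z ∈ I.cI c ∧
          (∀ a b, I.rI F z a → I.rI F z b → a = b) := by
      rintro y (rfl | hy)
      · obtain ⟨z, hz1, hz2, hz3⟩ := hex
        exact ⟨z, hz1, hz2, unique_of z hz3⟩
      · obtain ⟨z, hz1, hz2, hz3⟩ := hall y hy
        exact ⟨z, hz1, hz2, unique_of z hz3⟩
    have next : ∀ y : {y : I.Dom // y = x₀ ∨ I.rI R y x₀},
        ∃ z : {y : I.Dom // y = x₀ ∨ I.rI R y x₀},
          I.rI F z.1 y.1 ∧ z.1 ∈ I.cI c ∧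
          (∀ a b, I.rI F z.1 a → I.rI F z.1 b → a = b) := by
      rintro ⟨y, hy⟩
      obtain ⟨z, hz1, hz2, hz3⟩ := key y hy
      have hz0 : z = x₀ ∨ I.rI R z x₀ := by
        rcases hy with rfl | hy
        · exact Or.inr (hFsubR _ _ hz1)
        · exact Or.inr (hRtrans (hFsubR _ _ hz1) hy)
      exact ⟨⟨z, hz0⟩, hz1, hz2, hz3⟩
    choose nf hnf1 hnf2 hnf3 using next
    set f : ℕ → {y : I.Dom // y = x₀ ∨ I.rI R y x₀} :=
      fun n => Nat.rec ⟨x₀, Or.inl rfl⟩ (fun _ p => nf p) n with hf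
    have hfF : ∀ n, I.rI F (f (n + 1)).1 (f n).1 := fun n => hnf1 (f n)
    have hfC : ∀ n, (f (n + 1)).1 ∈ I.cI c := fun n => hnf2 (f n)
    have hfM : ∀ n a b, I.rI F (f (n + 1)).1 a → I.rI F (f (n + 1)).1 b → a = b :=
      fun n => hnf3 (f n)
    have hf0 : (f 0).1 = x₀ := rfl
    have hx₀C : x₀ ∉ I.cI c := hnC
    have desc : ∀ i j, (f (i + 1)).1 = (f (j + 1)).1 → (f i).1 = (f j).1 := by
      intro i j h
      exact hfM i (f i).1 (f j).1 (hfF i) (h ▸ hfF j)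
    have hinj : Function.Injective (fun n => (f n).1) := by
      intro i j hij
      have h : (f i).1 = (f j).1 := hij
      clear hij
      induction i generalizing j with
      | zero =>
        cases j with
        | zero => rfl
        | succ k =>
          exact absurd (show x₀ ∈ I.cI c from hf0 ▸ h ▸ hfC k) hx₀C
      | succ i ih =>
        cases j with
        | zero =>
          exact absurd (show x₀ ∈ I.cI c from hf0 ▸ h ▸ hfC i) hx₀C
        | succ k =>
          exact congrArg Nat.succ (ih (desc i k h))
    exact Infinite.of_injective _ hinj
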